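/- arXiv:1710.08350 — 2 statements merged into one kernel-verified Lean document; each statement's English description precedes it below -/
import Mathlib

section
/- Correctness of the double chain algorithm: let π be a template with n parameters and suppose m ≥ 0 satisfies V_{m+1} = V_m and J_{m+1} = J_m. Then π[V_m] = Z_Φ ∩ π[ℝ^n]. -/
open MvPolynomial

/-- The Lie derivative of a polynomial along the polynomial vector field `F`. -/
noncomputable def lieDeriv {N : ℕ} (F : Fin N → MvPolynomial (Fin N) ℝ)
    (p : MvPolynomial (Fin N) ℝ) : MvPolynomial (Fin N) ℝ :=
  ∑ i, pderiv i p * F i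

/-- `Z_Φ`: the set of polynomials whose induced behaviour vanishes identically on `D`. -/
def Zset {N : ℕ} (x : ℝ → Fin N → ℝ) (D : Set ℝ) : Set (MvPolynomial (Fin N) ℝ) :=
  {p | ∀ t ∈ D, eval (x t) p = 0}

/-- The vector space `V_i` of parameters `v` such that all Lie derivatives of `π[v]`
up to order `i` vanish at `v₀`. -/
def Vset {N n : ℕ} (F : Fin N → MvPolynomial (Fin N) ℝ) (v₀ : Fin N → ℝ)
    (π : (Fin n → ℝ) →ₗ[ℝ] MvPolynomial (Fin N) ℝ) (i : ℕ) : Set (Fin n → ℝ) :=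
  {v | ∀ j ≤ i, eval v₀ ((lieDeriv F)^[j] (π v)) = 0}

/-- The ideal `J_i` generated by `⋃_{j=0}^{i} 𝓛⁽ʲ⁾(π[V_i])`. -/
noncomputable def Jideal {N n : ℕ} (F : Fin N → MvPolynomial (Fin N) ℝ)
    (v₀ : Fin N → ℝ) (π : (Fin n → ℝ) →ₗ[ℝ] MvPolynomial (Fin N) ℝ) (i : ℕ) :
    Ideal (MvPolynomial (Fin N) ℝ) :=
  Ideal.span {q | ∃ j ≤ i, ∃ v ∈ Vset F v₀ π i, q = (lieDeriv F)^[j] (π v)}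

/-!
Let `J := J_m`. Its generators `𝓛⁽ʲ⁾(π[v])`, `j ≤ m`, `v ∈ V_m`, all vanish at `v₀`, and the two
stabilisation hypotheses say that `𝓛` maps each generator back into `J_{m+1} = J`. Since `𝓛` is a
derivation, `J` is then `𝓛`-invariant, so every `𝓛⁽ᵏ⁾(π[v])` with `v ∈ V_m` lies in `J` and vanishes
at `v₀`. Along the trajectory `𝓛⁽ᵏ⁾(p)(x(t))` is the `k`-th derivative of `p(x(t))`, so `p(x(t))`
is an analytic function all of whose derivatives vanish at `0`, hence it vanishes on the interval
`D`. Conversely `Z_Φ` is `𝓛`-invariant, so `π[v] ∈ Z_Φ` forces `v ∈ V_m` by evaluating at `t = 0`.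
-/

open Set Filter

theorem Derivation.mapsTo_span {R A : Type*} [CommSemiring R] [CommSemiring A] [Algebra R A]
    (d : Derivation R A A) {S : Set A} (hS : MapsTo d S (Ideal.span S)) :
    MapsTo d (Ideal.span S) (Ideal.span S) := by
  intro a ha
  induction ha using Submodule.span_induction with
  | mem a ha => exact hS ha
  | zero => simp
  | add a b _ _ ha hb => rw [map_add]; exact add_mem ha hb
  | smul b a ha hda =>
    rw [smul_eq_mul, d.leibniz, smul_eq_mul, smul_eq_mul]
    exact add_mem (Ideal.mul_mem_left _ b hda) (Ideal.mul_mem_right _ _ ha)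

theorem AnalyticOnNhd.eqOn_zero_of_iteratedDeriv_eq_zero {𝕜 E : Type*}
    [NontriviallyNormedField 𝕜] [CharZero 𝕜] [NormedAddCommGroup E] [NormedSpace 𝕜 E]
    [CompleteSpace E] {f : 𝕜 → E} {U : Set 𝕜} {z₀ : 𝕜} (hf : AnalyticOnNhd 𝕜 f U)
    (hU : IsPreconnected U) (h₀ : z₀ ∈ U) (hderiv : ∀ k, iteratedDeriv k f z₀ = 0) :
    EqOn f 0 U := by
  refine hf.eqOn_zero_of_preconnected_of_eventuallyEq_zero hU h₀ (analyticOrderAt_eq_top.mp ?_)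
  exact ENat.eq_top_iff_forall_ge.mpr fun n ↦
    (natCast_le_analyticOrderAt_iff_iteratedDeriv_eq_zero (hf z₀ h₀)).mpr fun i _ ↦ hderiv i

theorem iteratedDeriv_eqOn_of_hasDerivAt {𝕜 E : Type*} [NontriviallyNormedField 𝕜]
    [NormedAddCommGroup E] [NormedSpace 𝕜 E] {g : ℕ → 𝕜 → E} {U : Set 𝕜} (hU : IsOpen U)
    (hg : ∀ k, ∀ t ∈ U, HasDerivAt (g k) (g (k + 1) t) t) (k : ℕ) :
    EqOn (iteratedDeriv k (g 0)) (g k) U := by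
  induction k with
  | zero => intro t _; rw [iteratedDeriv_zero]
  | succ k ih =>
    intro t ht
    rw [iteratedDeriv_succ, (ih.eventuallyEq_of_mem (hU.mem_nhds ht)).deriv_eq, (hg k t ht).deriv]

section LieDerivative

variable {N : ℕ} {F : Fin N → MvPolynomial (Fin N) ℝ}

noncomputable def lieDerivation (F : Fin N → MvPolynomial (Fin N) ℝ) :
    Derivation ℝ (MvPolynomial (Fin N) ℝ) (MvPolynomial (Fin N) ℝ) :=
  ∑ i, F i • pderiv i

theorem coe_lieDerivation : ⇑(lieDerivation F) = lieDeriv F := by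
  ext1 p
  rw [lieDerivation, ← Derivation.coeFnAddMonoidHom_apply, map_sum, Finset.sum_apply]
  simp [lieDeriv, Derivation.coeFnAddMonoidHom_apply, mul_comm]

theorem lieDeriv_X (i : Fin N) : lieDeriv F (X i) = F i := by
  simp [lieDeriv, Pi.single_apply]

end LieDerivative

section Trajectory

variable {N : ℕ} {F : Fin N → MvPolynomial (Fin N) ℝ} {x : ℝ → Fin N → ℝ} {D : Set ℝ}

theorem hasDerivAt_eval_trajectory {t : ℝ} (hx : HasDerivAt x (fun i ↦ eval (x t) (F i)) t)
    (p : MvPolynomial (Fin N) ℝ) :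
    HasDerivAt (fun s ↦ eval (x s) p) (eval (x t) (lieDeriv F p)) t := by
  rw [← coe_lieDerivation]
  induction p using MvPolynomial.induction_on with
  | C a => simpa [← algebraMap_eq] using hasDerivAt_const t a
  | add p q hp hq => simpa only [map_add] using hp.fun_add hq
  | mul_X p i hp =>
    simp only [Derivation.leibniz, coe_lieDerivation, lieDeriv_X, smul_eq_mul, map_add, map_mul,
      eval_X] at hp ⊢
    exact (hp.fun_mul (hasDerivAt_pi.1 hx i)).congr_deriv (by ring)

theorem iteratedDeriv_eval_trajectory (hD : IsOpen D)
    (hsol : ∀ t ∈ D, HasDerivAt x (fun i ↦ eval (x t) (F i)) t) (p : MvPolynomial (Fin N) ℝ)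
    (k : ℕ) :
    EqOn (iteratedDeriv k fun t ↦ eval (x t) p) (fun t ↦ eval (x t) ((lieDeriv F)^[k] p)) D :=
  iteratedDeriv_eqOn_of_hasDerivAt (g := fun k t ↦ eval (x t) ((lieDeriv F)^[k] p)) hD
    (fun k t ht ↦ by
      simpa [Function.iterate_succ_apply'] using hasDerivAt_eval_trajectory (hsol t ht) _) k

theorem mem_Zset_of_iterate_lieDeriv_eval_eq_zero (hD : IsOpen D) (hDc : IsPreconnected D)
    (h0 : (0 : ℝ) ∈ D) (hsol : ∀ t ∈ D, HasDerivAt x (fun i ↦ eval (x t) (F i)) t)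
    (han : ∀ i, AnalyticOnNhd ℝ (fun t ↦ x t i) D) {p : MvPolynomial (Fin N) ℝ}
    (hp : ∀ k, eval (x 0) ((lieDeriv F)^[k] p) = 0) : p ∈ Zset x D := by
  have hana : AnalyticOnNhd ℝ (fun t ↦ eval (x t) p) D := by
    simpa [coe_aeval_eq_eval] using AnalyticOnNhd.aeval_mvPolynomial han p
  exact hana.eqOn_zero_of_iteratedDeriv_eq_zero hDc h0 fun k ↦
    (iteratedDeriv_eval_trajectory hD hsol p k h0).trans (hp k)

theorem mapsTo_lieDeriv_Zset (hD : IsOpen D)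
    (hsol : ∀ t ∈ D, HasDerivAt x (fun i ↦ eval (x t) (F i)) t) :
    MapsTo (lieDeriv F) (Zset x D) (Zset x D) := fun p hp t ht ↦
  (hasDerivAt_eval_trajectory (hsol t ht) p).unique <|
    (hasDerivAt_const t 0).congr_of_eventuallyEq (eventuallyEq_of_mem (hD.mem_nhds ht) hp)

end Trajectory

section DoubleChain

variable {N n : ℕ} {F : Fin N → MvPolynomial (Fin N) ℝ} {v₀ : Fin N → ℝ}
  {π : (Fin n → ℝ) →ₗ[ℝ] MvPolynomial (Fin N) ℝ}

theorem Jideal_le_ker_eval (i : ℕ) : Jideal F v₀ π i ≤ RingHom.ker (eval v₀) :=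
  Ideal.span_le.mpr <| by rintro _ ⟨j, hj, v, hv, rfl⟩; exact hv j hj

theorem mapsTo_lieDeriv_Jideal {m : ℕ} (hV : Vset F v₀ π (m + 1) = Vset F v₀ π m)
    (hJ : Jideal F v₀ π (m + 1) = Jideal F v₀ π m) :
    MapsTo (lieDeriv F) (Jideal F v₀ π m) (Jideal F v₀ π m) := by
  rw [← coe_lieDerivation]
  refine (lieDerivation F).mapsTo_span ?_
  rintro _ ⟨j, hj, v, hv, rfl⟩
  rw [coe_lieDerivation, ← Function.iterate_succ_apply' (lieDeriv F), ← Jideal, ← hJ]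
  exact Ideal.subset_span ⟨j + 1, by omega, v, hV ▸ hv, rfl⟩

theorem iterate_lieDeriv_mem_Jideal {m : ℕ} (hV : Vset F v₀ π (m + 1) = Vset F v₀ π m)
    (hJ : Jideal F v₀ π (m + 1) = Jideal F v₀ π m) {v : Fin n → ℝ} (hv : v ∈ Vset F v₀ π m)
    (k : ℕ) : (lieDeriv F)^[k] (π v) ∈ Jideal F v₀ π m :=
  (mapsTo_lieDeriv_Jideal hV hJ).iterate k (Ideal.subset_span ⟨0, m.zero_le, v, hv, rfl⟩)

end DoubleChain

theorem stmt10_general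
    (N n : ℕ)
    (F : Fin N → MvPolynomial (Fin N) ℝ) (v₀ : Fin N → ℝ)
    (D : Set ℝ) (hD : IsOpen D) (hDc : D.OrdConnected) (h0 : (0 : ℝ) ∈ D)
    (x : ℝ → Fin N → ℝ)
    (hsol : ∀ t ∈ D, HasDerivAt x (fun i => eval (x t) (F i)) t)
    (hx0 : x 0 = v₀)
    (han : ∀ i, AnalyticOnNhd ℝ (fun t => x t i) D)
    (π : (Fin n → ℝ) →ₗ[ℝ] MvPolynomial (Fin N) ℝ) (m : ℕ)
    (hV : Vset F v₀ π (m + 1) = Vset F v₀ π m)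
    (hJ : Jideal F v₀ π (m + 1) = Jideal F v₀ π m) :
    ⇑π '' Vset F v₀ π m = Zset x D ∩ Set.range ⇑π := by
  ext q
  constructor
  · rintro ⟨v, hv, rfl⟩
    refine ⟨mem_Zset_of_iterate_lieDeriv_eval_eq_zero hD hDc.isPreconnected h0 hsol han
      fun k ↦ ?_, v, rfl⟩
    rw [hx0]
    exact RingHom.mem_ker.mp (Jideal_le_ker_eval m (iterate_lieDeriv_mem_Jideal hV hJ hv k))
  · rintro ⟨hq, v, rfl⟩
    refine ⟨v, fun j _ ↦ ?_, rfl⟩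
    simpa [hx0] using (mapsTo_lieDeriv_Zset hD hsol).iterate j hq 0 h0

/-- correctness of the double chain algorithm: if `V_{m+1} = V_m` and
`J_{m+1} = J_m`, then `π[V_m] = Z_Φ ∩ π[ℝⁿ]`. -/
theorem stmt10
    (N n : ℕ) (hN : 1 ≤ N)
    (F : Fin N → MvPolynomial (Fin N) ℝ) (v₀ : Fin N → ℝ)
    (D : Set ℝ) (hD : IsOpen D) (hDc : D.OrdConnected) (h0 : (0 : ℝ) ∈ D)
    (x : ℝ → Fin N → ℝ)
    (hsol : ∀ t ∈ D, HasDerivAt x (fun i => eval (x t) (F i)) t)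
    (hx0 : x 0 = v₀)
    (han : ∀ i, AnalyticOnNhd ℝ (fun t => x t i) D)
    (π : (Fin n → ℝ) →ₗ[ℝ] MvPolynomial (Fin N) ℝ) (m : ℕ)
    (hV : Vset F v₀ π (m + 1) = Vset F v₀ π m)
    (hJ : Jideal F v₀ π (m + 1) = Jideal F v₀ π m) :
    ⇑π '' Vset F v₀ π m = Zset x D ∩ Set.range ⇑π :=
  stmt10_general N n F v₀ D hD hDc h0 x hsol hx0 han π m hV hJ
end

section
/- Approximate linearization: let m ≥ 1, let α_1,…,α_M ∈ ℝ[x], let p ∈ ℝ[x], and suppose there exist a vector p̂ ∈ ℝ^M and a real M×M matrix L such that for every 0 ≤ j ≤ m−1 one has 𝓛⁽ʲ⁾(p) = ∑_{k=1}^M (L^j p̂)_k · α_k. Let φ = (α_1(v₀),…,α_M(v₀))^T ∈ ℝ^M, K_m = span{φ, L^Tφ, …, (L^T)^{m−1}φ}, let B be an M×l matrix with orthonormal columns (B^T B = I_l) whose column span equals K_m, set A = B^T L^T B, and let y : ℝ → ℝ^l be the (unique) solution of the linear system y′(t) = A y(t), y(0) = B^T φ. Then for every 0 ≤ j ≤ m−1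 the j-th derivative at t = 0 of t ↦ p(x(t)) equals the j-th derivative at t = 0 of t ↦ p̂^T B y(t); consequently p(x(t)) − p̂^T B y(t) = O(t^m) as t → 0. -/
/-!
Along a solution of `x' = F(x)` one has `(q ∘ x)' = (𝓛 q) ∘ x`, so for `j < m` the `j`-th
derivative of `p ∘ x` at `0` is `(𝓛ʲ p)(v₀) = (Lʲ p̂) ⬝ φ = p̂ ⬝ (Lᵀ)ʲ φ`. On the linear side the
`j`-th derivative of `p̂ᵀ B y` at `0` is `p̂ᵀ B Aʲ Bᵀ φ`. As `B Bᵀ` fixes the column span of `B`,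
the Krylov space, which contains `(Lᵀ)ⁱ φ` for `i < m`, induction on `j` gives
`B Aʲ Bᵀ φ = (Lᵀ)ʲ φ` for `j < m`. So the difference of the two smooth functions has vanishing
derivatives of order `< m` at `0`, and Taylor's theorem makes it `O(tᵐ)`.
-/

open MvPolynomial Matrix Filter Asymptotics
open scoped Topology

theorem contDiff_mvPolynomial_eval {σ : Type*} [Fintype σ] (q : MvPolynomial σ ℝ)
    {n : WithTop ℕ∞} : ContDiff ℝ n fun v : σ → ℝ => eval v q :=
  (AnalyticOnNhd.eval_mvPolynomial q).contDiff

section LieDeriv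

variable {N : ℕ} (F : Fin N → MvPolynomial (Fin N) ℝ)

theorem lieDeriv_C (a : ℝ) : lieDeriv F (C a) = 0 := by
  simp [lieDeriv]

theorem lieDeriv_add (p q : MvPolynomial (Fin N) ℝ) :
    lieDeriv F (p + q) = lieDeriv F p + lieDeriv F q := by
  simp [lieDeriv, add_mul, Finset.sum_add_distrib]

theorem lieDeriv_mul_X (q : MvPolynomial (Fin N) ℝ) (i : Fin N) :
    lieDeriv F (q * X i) = lieDeriv F q * X i + q * F i := by
  simp only [lieDeriv, pderiv_mul, pderiv_X, Pi.single_apply, mul_ite, mul_one, mul_zero,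
    add_mul, Finset.sum_add_distrib, ite_mul, zero_mul, Finset.sum_ite_eq, Finset.mem_univ,
    if_true, Finset.sum_mul, mul_right_comm _ (X i)]

theorem hasDerivAt_eval_comp {x : ℝ → Fin N → ℝ} {t : ℝ}
    (hx : HasDerivAt x (fun i => eval (x t) (F i)) t) (q : MvPolynomial (Fin N) ℝ) :
    HasDerivAt (fun s => eval (x s) q) (eval (x t) (lieDeriv F q)) t := by
  induction q using MvPolynomial.induction_on with
  | C a => simpa [lieDeriv_C] using hasDerivAt_const t a
  | add p q hp hq => simpa [lieDeriv_add] using hp.fun_add hq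
  | mul_X q i hq => simpa [lieDeriv_mul_X] using hq.fun_mul (hasDerivAt_pi.1 hx i)

theorem iteratedDeriv_eval_comp {x : ℝ → Fin N → ℝ} {D : Set ℝ} (hD : IsOpen D)
    (hx : ∀ t ∈ D, HasDerivAt x (fun i => eval (x t) (F i)) t) (q : MvPolynomial (Fin N) ℝ)
    (j : ℕ) :
    Set.EqOn (iteratedDeriv j fun s => eval (x s) q)
      (fun s => eval (x s) ((lieDeriv F)^[j] q)) D := by
  induction j with
  | zero => intro t _; simp
  | succ j ih =>
    intro t ht
    rw [iteratedDeriv_succ, (ih.eventuallyEq_of_mem (hD.mem_nhds ht)).deriv_eq,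
      (hasDerivAt_eval_comp F (hx t ht) _).deriv, Function.iterate_succ_apply']

end LieDeriv

section Krylov

variable {R m n : Type*} [CommRing R] [Fintype m] [Fintype n] [DecidableEq n]
  {B : Matrix m n R} (hB : Bᵀ * B = 1)
include hB

theorem mulVec_transpose_mulVec_of_mem_span {w : m → R}
    (hw : w ∈ Submodule.span R (Set.range Bᵀ)) : B *ᵥ (Bᵀ *ᵥ w) = w := by
  induction hw using Submodule.span_induction with
  | mem w hw =>
    obtain ⟨i, rfl⟩ := hw
    have hcol : Bᵀ i = B *ᵥ Pi.single i 1 := by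
      ext k; simp [mulVec_single, transpose_apply]
    rw [hcol, mulVec_mulVec _ Bᵀ B, hB, one_mulVec]
  | zero => simp
  | add a b _ _ ha hb => simp [mulVec_add, ha, hb]
  | smul c a _ ha => simp [mulVec_smul, ha]

theorem mulVec_pow_compression_mulVec [DecidableEq m] {C : Matrix m m R} {φ : m → R} {k : ℕ}
    (hK : ∀ j < k, C ^ j *ᵥ φ ∈ Submodule.span R (Set.range Bᵀ)) :
    ∀ j < k, B *ᵥ ((Bᵀ * C * B) ^ j *ᵥ (Bᵀ *ᵥ φ)) = C ^ j *ᵥ φ := by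
  intro j
  induction j with
  | zero =>
    intro hk
    simpa using mulVec_transpose_mulVec_of_mem_span hB (by simpa using hK 0 hk)
  | succ j ih =>
    intro hj
    have hcompress : ∀ w, (Bᵀ * C * B) *ᵥ w = Bᵀ *ᵥ (C *ᵥ (B *ᵥ w)) := fun w => by
      rw [mulVec_mulVec, mulVec_mulVec]
    rw [pow_succ', ← mulVec_mulVec, hcompress, ih (by omega), mulVec_mulVec φ C, ← pow_succ',
      mulVec_transpose_mulVec_of_mem_span hB (hK _ hj)]

end Krylov

section ODE

variable {𝕜 : Type*} [NontriviallyNormedField 𝕜]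

theorem contDiffOn_of_hasDerivAt_comp {E : Type*} [NormedAddCommGroup E] [NormedSpace 𝕜 E]
    {G : E → E} {x : 𝕜 → E} {s : Set 𝕜} (hs : IsOpen s)
    (hx : ∀ t ∈ s, HasDerivAt x (G (x t)) t) {n : ℕ} (hG : ContDiff 𝕜 n G) :
    ContDiffOn 𝕜 (n + 1) x s := by
  have hdiff : DifferentiableOn 𝕜 x s := fun t ht =>
    (hx t ht).differentiableAt.differentiableWithinAt
  have hstep : ∀ k : ℕ, ContDiffOn 𝕜 k (G ∘ x) s → ContDiffOn 𝕜 (k + 1) x s := fun k hk => by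
    rw [contDiffOn_succ_iff_deriv_of_isOpen hs]
    exact ⟨hdiff, by simp, hk.congr fun t ht => (hx t ht).deriv⟩
  induction n with
  | zero => exact hstep 0 (contDiffOn_zero.2 (hG.continuous.comp_continuousOn hdiff.continuousOn))
  | succ n ih => exact hstep _ (hG.comp_contDiffOn (ih (hG.of_le (by norm_cast; omega))))

variable {ι : Type*} [Fintype ι]

theorem HasDerivAt.const_dotProduct (c : ι → 𝕜) {y : 𝕜 → ι → 𝕜} {y' : ι → 𝕜} {t : 𝕜}
    (h : HasDerivAt y y' t) : HasDerivAt (fun s => c ⬝ᵥ y s) (c ⬝ᵥ y') t :=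
  HasDerivAt.fun_sum fun k _ => ((hasDerivAt_pi.1 h) k).const_mul (c k)

variable {A : Matrix ι ι 𝕜} {y : 𝕜 → ι → 𝕜}

theorem contDiff_of_hasDerivAt_mulVec (hy : ∀ t, HasDerivAt y (A *ᵥ y t) t) (n : ℕ) :
    ContDiff 𝕜 n y := by
  rw [← contDiffOn_univ]
  refine (contDiffOn_of_hasDerivAt_comp isOpen_univ (fun t _ => hy t) (n := n) ?_).of_le (by simp)
  exact contDiff_pi.2 fun i => by unfold mulVec dotProduct; fun_prop

theorem iteratedDeriv_dotProduct_of_hasDerivAt_mulVec [DecidableEq ι]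
    (hy : ∀ t, HasDerivAt y (A *ᵥ y t) t) (j : ℕ) (c : ι → 𝕜) :
    iteratedDeriv j (fun t => c ⬝ᵥ y t) = fun t => c ⬝ᵥ (A ^ j *ᵥ y t) := by
  induction j generalizing c with
  | zero => simp
  | succ j ih =>
    have hderiv : deriv (fun t => c ⬝ᵥ y t) = fun t => (c ᵥ* A) ⬝ᵥ y t := by
      ext t
      rw [((hy t).const_dotProduct c).deriv, dotProduct_mulVec]
    ext t
    simp only [iteratedDeriv_succ', hderiv, ih, dotProduct_mulVec, vecMul_vecMul, pow_succ']

end ODE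

theorem isBigO_pow_of_iteratedDeriv_eq_zero {E : Type*} [NormedAddCommGroup E]
    [NormedSpace ℝ E] {f : ℝ → E} {x₀ : ℝ} {n : ℕ} (hf : ContDiffAt ℝ n f x₀)
    (h : ∀ k < n, iteratedDeriv k f x₀ = 0) :
    f =O[𝓝 x₀] fun x => (x - x₀) ^ n := by
  obtain ⟨u, hu, hfu⟩ := hf.contDiffOn le_rfl (by simp)
  obtain ⟨r, hr, hru⟩ := Metric.mem_nhds_iff.1 hu
  have hball : Metric.ball x₀ r ∈ 𝓝 x₀ := Metric.ball_mem_nhds x₀ hr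
  have htaylor := taylor_isLittleO (convex_ball x₀ r) (Metric.mem_ball_self hr) (hfu.mono hru)
  rw [nhdsWithin_eq_nhds.2 hball] at htaylor
  have hpoly : taylorWithinEval f n (Metric.ball x₀ r) x₀
      = fun x => (x - x₀) ^ n • ((n.factorial : ℝ)⁻¹ • iteratedDeriv n f x₀) := by
    ext x
    rw [taylor_within_apply, Finset.sum_range_succ, Finset.sum_eq_zero fun k hk => ?_, zero_add,
      iteratedDerivWithin_of_isOpen Metric.isOpen_ball (Metric.mem_ball_self hr), smul_smul,
      mul_comm]
    rw [iteratedDerivWithin_of_isOpen Metric.isOpen_ball (Metric.mem_ball_self hr),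
      h k (Finset.mem_range.1 hk), smul_zero]
  have hT : taylorWithinEval f n (Metric.ball x₀ r) x₀ =O[𝓝 x₀] fun x => (x - x₀) ^ n := by
    rw [hpoly]
    exact isBigO_of_le' _ fun x => (norm_smul _ _).trans_le (mul_comm _ _).le
  simpa using htaylor.isBigO.add hT

theorem stmt18_general
    (N : ℕ)
    (F : Fin N → MvPolynomial (Fin N) ℝ) (v₀ : Fin N → ℝ)
    (D : Set ℝ) (hD : IsOpen D) (h0 : (0 : ℝ) ∈ D)
    (x : ℝ → Fin N → ℝ)
    (hsol : ∀ t ∈ D, HasDerivAt x (fun i => eval (x t) (F i)) t)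
    (hx0 : x 0 = v₀)
    (m : ℕ)
    (M : ℕ) (α : Fin M → MvPolynomial (Fin N) ℝ)
    (p : MvPolynomial (Fin N) ℝ)
    (phat : Fin M → ℝ) (L : Matrix (Fin M) (Fin M) ℝ)
    (hrep : ∀ j < m, (lieDeriv F)^[j] p = ∑ k, ((L ^ j) *ᵥ phat) k • α k)
    (φ : Fin M → ℝ) (hφ : φ = fun k => eval v₀ (α k))
    (l : ℕ) (B : Matrix (Fin M) (Fin l) ℝ)
    (hortho : Bᵀ * B = 1)
    (hKspan : Submodule.span ℝ (Set.range Bᵀ)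
      = Submodule.span ℝ {w : Fin M → ℝ | ∃ j < m, w = (Lᵀ ^ j) *ᵥ φ})
    (A : Matrix (Fin l) (Fin l) ℝ) (hA : A = Bᵀ * Lᵀ * B)
    (y : ℝ → Fin l → ℝ)
    (hy : ∀ t, HasDerivAt y (A *ᵥ y t) t)
    (hy0 : y 0 = Bᵀ *ᵥ φ) :
    (∀ j < m, iteratedDerivWithin j (fun t => eval (x t) p) D 0
      = iteratedDeriv j (fun t => phat ⬝ᵥ (B *ᵥ y t)) 0) ∧
    (fun t => eval (x t) p - phat ⬝ᵥ (B *ᵥ y t)) =O[𝓝 (0 : ℝ)]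
      fun t => t ^ m := by
  have hlin : (fun t => phat ⬝ᵥ (B *ᵥ y t)) = fun t => (phat ᵥ* B) ⬝ᵥ y t :=
    funext fun t => dotProduct_mulVec phat B (y t)
  have hkrylov : ∀ j < m, Lᵀ ^ j *ᵥ φ ∈ Submodule.span ℝ (Set.range Bᵀ) := fun j hj =>
    hKspan ▸ Submodule.subset_span ⟨j, hj, rfl⟩
  have hderiv : ∀ j < m, iteratedDerivWithin j (fun t => eval (x t) p) D 0
      = iteratedDeriv j (fun t => phat ⬝ᵥ (B *ᵥ y t)) 0 := by
    intro j hj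
    have hnonlinear :
        iteratedDerivWithin j (fun t => eval (x t) p) D 0 = (L ^ j *ᵥ phat) ⬝ᵥ φ := by
      rw [iteratedDerivWithin_of_isOpen hD h0, iteratedDeriv_eval_comp F hD hsol p j h0]
      simp [hrep j hj, hx0, hφ, dotProduct, smul_eval]
    have hlinear :
        iteratedDeriv j (fun t => phat ⬝ᵥ (B *ᵥ y t)) 0 = (L ^ j *ᵥ phat) ⬝ᵥ φ := by
      rw [hlin, iteratedDeriv_dotProduct_of_hasDerivAt_mulVec hy]
      dsimp only
      rw [← dotProduct_mulVec, hy0, hA, mulVec_pow_compression_mulVec hortho hkrylov j hj,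
        dotProduct_mulVec, ← transpose_pow, vecMul_transpose]
    rw [hnonlinear, hlinear]
  have hpx : ContDiffOn ℝ m (fun t => eval (x t) p) D :=
    (contDiff_mvPolynomial_eval p).comp_contDiffOn
      ((contDiffOn_of_hasDerivAt_comp (G := fun v i => eval v (F i)) hD hsol
        (contDiff_pi.2 fun i => contDiff_mvPolynomial_eval (F i))).of_le le_self_add)
  have hg : ContDiff ℝ m fun t => phat ⬝ᵥ (B *ᵥ y t) := by
    have hy_smooth := contDiff_of_hasDerivAt_mulVec hy m
    rw [hlin]
    unfold dotProduct
    fun_prop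
  have hpx0 : ContDiffAt ℝ m (fun t => eval (x t) p) 0 := hpx.contDiffAt (hD.mem_nhds h0)
  have hvanish : ∀ j < m,
      iteratedDeriv j (fun t => eval (x t) p - phat ⬝ᵥ (B *ᵥ y t)) 0 = 0 := by
    intro j hj
    have hjm : (j : WithTop ℕ∞) ≤ m := by exact_mod_cast hj.le
    rw [iteratedDeriv_fun_sub (hpx0.of_le hjm) (hg.contDiffAt.of_le hjm),
      ← iteratedDerivWithin_of_isOpen hD h0, hderiv j hj, sub_self]
  refine ⟨hderiv, ?_⟩
  simpa using isBigO_pow_of_iteratedDeriv_eq_zero (hpx0.sub hg.contDiffAt) hvanish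

/-- approximate linearization: suppose `𝓛⁽ʲ⁾(p) = ∑ₖ (Lʲ p̂)ₖ αₖ`
for `0 ≤ j ≤ m−1`, let `φ = (α₁(v₀),…,α_M(v₀))`, let `B` have orthonormal columns
spanning the Krylov space `K_m = span{φ, Lᵀφ, …, (Lᵀ)^{m−1}φ}`, `A = Bᵀ Lᵀ B`, and
let `y` solve `y′ = A y`, `y(0) = Bᵀ φ`. Then for `0 ≤ j ≤ m−1` the `j`-th
derivative at `0` of `t ↦ p(x(t))` equals that of `t ↦ p̂ᵀ B y(t)`; consequently
`p(x(t)) − p̂ᵀ B y(t) = O(tᵐ)` as `t → 0`. -/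
theorem stmt18
    (N : ℕ) (hN : 1 ≤ N)
    (F : Fin N → MvPolynomial (Fin N) ℝ) (v₀ : Fin N → ℝ)
    (D : Set ℝ) (hD : IsOpen D) (hDc : D.OrdConnected) (h0 : (0 : ℝ) ∈ D)
    (x : ℝ → Fin N → ℝ)
    (hsol : ∀ t ∈ D, HasDerivAt x (fun i => eval (x t) (F i)) t)
    (hx0 : x 0 = v₀)
    (m : ℕ) (hm : 1 ≤ m)
    (M : ℕ) (α : Fin M → MvPolynomial (Fin N) ℝ)
    (p : MvPolynomial (Fin N) ℝ)
    (phat : Fin M → ℝ) (L : Matrix (Fin M) (Fin M) ℝ)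
    (hrep : ∀ j < m, (lieDeriv F)^[j] p = ∑ k, ((L ^ j) *ᵥ phat) k • α k)
    (φ : Fin M → ℝ) (hφ : φ = fun k => eval v₀ (α k))
    (l : ℕ) (B : Matrix (Fin M) (Fin l) ℝ)
    (hortho : Bᵀ * B = 1)
    (hKspan : Submodule.span ℝ (Set.range Bᵀ)
      = Submodule.span ℝ {w : Fin M → ℝ | ∃ j < m, w = (Lᵀ ^ j) *ᵥ φ})
    (A : Matrix (Fin l) (Fin l) ℝ) (hA : A = Bᵀ * Lᵀ * B)
    (y : ℝ → Fin l → ℝ)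
    (hy : ∀ t, HasDerivAt y (A *ᵥ y t) t)
    (hy0 : y 0 = Bᵀ *ᵥ φ) :
    (∀ j < m, iteratedDerivWithin j (fun t => eval (x t) p) D 0
      = iteratedDeriv j (fun t => phat ⬝ᵥ (B *ᵥ y t)) 0) ∧
    (fun t => eval (x t) p - phat ⬝ᵥ (B *ᵥ y t)) =O[𝓝 (0 : ℝ)]
      fun t => t ^ m :=
  stmt18_general N F v₀ D hD h0 x hsol hx0 m M α p phat L hrep φ hφ l B hortho hKspan A hA y hy hy0
end
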